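/- arXiv:1210.2587 — 5 statements merged into one kernel-verified Lean document; each statement's English description precedes it below -/
import Mathlib

section
/- For all natural numbers n and k with 2 ≤ k ≤ n, the recurrence D(n,k) = (k−1)·D(n−1,k) + k·D(n−1,k−1) holds. -/
namespace PaperStmt

/-- `w : Fin n → V` is a walk of length `n - 1` in the simple graph `G`:
a sequence of `n` vertices in which consecutive vertices are adjacent. -/
def IsWalk {V : Type*} (G : SimpleGraph V) {n : ℕ} (w : Fin n → V) : Prop :=
  ∀ (i : ℕ) (h : i + 1 < n), G.Adj (w ⟨i, Nat.lt_of_succ_lt h⟩) (w ⟨i + 1, h⟩)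

/-- `Y n G` is the number of walks of length `n - 1` in `G` that visit every
vertex of `G` at least once. -/
noncomputable def Y {V : Type*} [Fintype V] (n : ℕ) (G : SimpleGraph V) : ℕ :=
  Nat.card {w : Fin n → V // IsWalk G w ∧ Function.Surjective w}

/-- `D n k = Y n K_k`, where `K_k` is the complete graph on `k` vertices. -/
noncomputable def D (n k : ℕ) : ℕ :=
  Y n (⊤ : SimpleGraph (Fin k))

/-!
Cut a surjective walk in `K_k` of length `n + 1` into its initial walk `u` and its last vertex
`a`. Either `u` is already surjective, and `a` is any of the `k - 1` vertices other than the last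
vertex of `u`; or `u` misses exactly the vertex `a`, so it is a surjective walk in
`K_k - a ≅ K_{k-1}`, and `a` is any of the `k` vertices.
-/

open Function SimpleGraph Set

section Walks

variable {V W : Type*} {G : SimpleGraph V} {H : SimpleGraph W} {n : ℕ}

lemma isWalk_comp_embedding_iff (f : G ↪g H) {w : Fin n → V} :
    IsWalk H (f ∘ w) ↔ IsWalk G w :=
  forall₂_congr fun _ _ => f.map_adj_iff

lemma isWalk_iff_adj_castSucc_succ {w : Fin (n + 1) → V} :
    IsWalk G w ↔ ∀ i : Fin n, G.Adj (w i.castSucc) (w i.succ) :=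
  ⟨fun h i => h i (by omega), fun h i hi => h ⟨i, by omega⟩⟩

lemma isWalk_snoc_iff {u : Fin (n + 1) → V} {a : V} :
    IsWalk G (Fin.snoc u a : Fin (n + 2) → V) ↔ IsWalk G u ∧ G.Adj (u (Fin.last n)) a := by
  simp [isWalk_iff_adj_castSucc_succ, Fin.forall_fin_succ', Fin.succ_castSucc, -Fin.castSucc_succ]

lemma Y_congr [Fintype V] [Fintype W] (e : G ≃g H) (n : ℕ) : Y n G = Y n H :=
  Nat.card_congr <| (Equiv.piCongrRight fun _ => e.toEquiv).subtypeEquiv fun w =>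
    and_congr (isWalk_comp_embedding_iff e.toEmbedding).symm
      (e.toEquiv.comp_surjective w).symm

lemma Y_top_eq_D [Fintype V] (n : ℕ) : Y n (⊤ : SimpleGraph V) = D n (Fintype.card V) :=
  Y_congr (Iso.completeGraph (Fintype.equivFin V)) n

lemma card_isWalk_range_eq (s : Set V) [Fintype s] :
    Nat.card {u : Fin n → V // IsWalk G u ∧ range u = s} = Y n (G.induce s) := by
  refine Nat.card_congr
    { toFun := fun u => ⟨fun i => ⟨u.1 i, u.2.2.subset (mem_range_self i)⟩,
        (isWalk_comp_embedding_iff (Embedding.induce s)).1 u.2.1, fun x => by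
          obtain ⟨i, hi⟩ : x.1 ∈ range u.1 := u.2.2.symm.subset x.2
          exact ⟨i, Subtype.ext hi⟩⟩
      invFun := fun u => ⟨Subtype.val ∘ u.1,
        (isWalk_comp_embedding_iff (Embedding.induce s)).2 u.2.1,
        by rw [range_comp, u.2.2.range_eq, image_univ, Subtype.range_coe]⟩
      left_inv := fun _ => rfl
      right_inv := fun _ => rfl }

end Walks

lemma _root_.Set.insert_eq_univ_iff {α : Type*} {a : α} {s : Set α} :
    insert a s = univ ↔ s = univ ∨ s = {a}ᶜ := by
  by_cases ha : a ∈ s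
  · rw [insert_eq_of_mem ha]
    exact ⟨Or.inl, fun h => h.resolve_right fun hs => (hs ▸ ha) rfl⟩
  · simp only [Set.ext_iff, mem_insert_iff, mem_univ, mem_compl_singleton_iff, iff_true]
    grind

lemma _root_.Nat.card_subtype_and_ne {α β : Type*} [Finite α] [Fintype β] (P : α → Prop) (f : α → β) :
    Nat.card {p : β × α // P p.2 ∧ f p.2 ≠ p.1} = Nat.card {a // P a} * (Nat.card β - 1) := by
  let e : {p : β × α // P p.2 ∧ f p.2 ≠ p.1} ≃ Σ a : {a // P a}, {b // b ≠ f a} :=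
    { toFun := fun p => ⟨⟨p.1.2, p.2.1⟩, ⟨p.1.1, p.2.2.symm⟩⟩
      invFun := fun q => ⟨(q.2.1, q.1.1), q.1.2, q.2.2.symm⟩
      left_inv := fun _ => rfl
      right_inv := fun _ => rfl }
  classical
  have := Fintype.ofFinite α
  rw [Nat.card_congr e, Nat.card_sigma]
  simp [Nat.card_eq_fintype_card]

lemma isWalk_top_snoc_and_surjective_iff {V : Type*} {n : ℕ} {u : Fin (n + 1) → V} {a : V} :
    IsWalk ⊤ (Fin.snoc u a : Fin (n + 2) → V) ∧ Surjective (Fin.snoc u a : Fin (n + 2) → V) ↔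
      (IsWalk ⊤ u ∧ Surjective u) ∧ u (Fin.last n) ≠ a ∨ IsWalk ⊤ u ∧ range u = {a}ᶜ := by
  rw [isWalk_snoc_iff, top_adj, ← range_eq_univ, Fin.range_snoc, Set.insert_eq_univ_iff,
    ← range_eq_univ]
  have : range u = {a}ᶜ → u (Fin.last n) ≠ a := fun h => h.subset (mem_range_self _)
  tauto

section Complete

variable {V : Type*} [Fintype V] {n : ℕ}

lemma card_isWalk_top_range_eq_compl_singleton (a : V) :
    Nat.card {u : Fin n → V // IsWalk ⊤ u ∧ range u = {a}ᶜ} = D n (Fintype.card V - 1) := by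
  classical
  rw [card_isWalk_range_eq, induce_top, Y_top_eq_D]
  exact congrArg _ (Set.card_ne_eq a)

theorem Y_top_add_two (n : ℕ) :
    Y (n + 2) (⊤ : SimpleGraph V) =
      (Fintype.card V - 1) * Y (n + 1) (⊤ : SimpleGraph V) +
        Fintype.card V * D (n + 1) (Fintype.card V - 1) := by
  classical
  have hsplit : Y (n + 2) (⊤ : SimpleGraph V) =
      Nat.card {p : V × (Fin (n + 1) → V) //
        (IsWalk ⊤ p.2 ∧ Surjective p.2) ∧ p.2 (Fin.last n) ≠ p.1} +
      Nat.card {p : V × (Fin (n + 1) → V) // IsWalk ⊤ p.2 ∧ range p.2 = {p.1}ᶜ} := by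
    rw [← Nat.card_sum]
    refine Nat.card_congr <|
      ((Fin.snocEquiv fun _ => V).subtypeEquiv fun _ => Iff.rfl).symm.trans <|
      (Equiv.subtypeEquivRight fun _ => isWalk_top_snoc_and_surjective_iff).trans <|
      subtypeOrEquiv _ _ (Pi.disjoint_iff.2 fun p => Prop.disjoint_iff.2 ?_)
    rintro ⟨⟨⟨-, hs⟩, -⟩, -, hr⟩
    rw [hs.range_eq] at hr
    exact (hr ▸ mem_univ p.1 : p.1 ∈ ({p.1}ᶜ : Set V)) rfl
  rw [hsplit, Nat.card_subtype_and_ne (fun u : Fin (n + 1) → V => IsWalk ⊤ u ∧ Surjective u)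
    (fun u => u (Fin.last n)), Nat.card_congr (Equiv.subtypeProdEquivSigmaSubtype
    fun a u => IsWalk ⊤ u ∧ range u = {a}ᶜ), Nat.card_sigma]
  simp only [card_isWalk_top_range_eq_compl_singleton]
  simp only [Finset.sum_const, Finset.card_univ, smul_eq_mul, Nat.card_eq_fintype_card, Y]
  ring

end Complete

theorem D_recurrence (n k : ℕ) (hk : 2 ≤ k) (hkn : k ≤ n) :
    D n k = (k - 1) * D (n - 1) k + k * D (n - 1) (k - 1) := by
  obtain ⟨m, rfl⟩ : ∃ m, n = m + 2 := ⟨n - 2, by omega⟩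
  have h := Y_top_add_two (V := Fin k) m
  rw [Fintype.card_fin] at h
  exact h

end PaperStmt
end

section
/- For all natural numbers k ≥ 4 and n ≥ 1, if (k−1)·(k−2)^{n−1} < k·(k−1)^{n−1} − k·(k−1)·(k−2)^{n−1}, then D(n,k−1) < D(n,k). -/
namespace PaperStmt

/-! ### Auxiliary machinery -/

open Function

/-- Index of `y` among the `m` elements of `Fin (m+1)` distinct from `p`. -/
noncomputable def idx {m : ℕ} (p y : Fin (m + 1)) (h : y ≠ p) : Fin m :=
  (Fin.exists_succAbove_eq h).choose

lemma succAbove_idx {m : ℕ} (p y : Fin (m + 1)) (h : y ≠ p) :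
    p.succAbove (idx p y h) = y :=
  (Fin.exists_succAbove_eq h).choose_spec

lemma idx_eq_imp {m : ℕ} {p p' y y' : Fin (m + 1)} {h : y ≠ p} {h' : y' ≠ p'}
    (hp : p = p') (e : idx p y h = idx p' y' h') : y = y' := by
  subst hp
  rw [← succAbove_idx p y h, ← succAbove_idx p y' h', e]

/-- Build a walk in the complete graph from a start and a sequence of steps. -/
def nth {m : ℕ} (a : Fin (m + 1)) (f : ℕ → Fin m) : ℕ → Fin (m + 1)
  | 0 => a
  | j + 1 => (nth a f j).succAbove (f j)

def fext {m j : ℕ} (f : Fin (j + 1) → Fin m) : ℕ → Fin m :=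
  fun i => if h : i < j + 1 then f ⟨i, h⟩ else f ⟨0, Nat.succ_pos j⟩

lemma fext_lt {m j : ℕ} (f : Fin (j + 1) → Fin m) {i : ℕ} (h : i < j + 1) :
    fext f i = f ⟨i, h⟩ := dif_pos h

set_option maxHeartbeats 1600000 in
lemma card_walks (m n' : ℕ) :
    Nat.card {w : Fin (n' + 1) → Fin (m + 1) // IsWalk ⊤ w} = (m + 1) * m ^ n' := by
  have hcard : Nat.card (Fin (m + 1) × (Fin n' → Fin m)) = (m + 1) * m ^ n' := by
    simp [Nat.card_eq_fintype_card]
  rw [← hcard]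
  apply le_antisymm
  · apply Nat.card_le_card_of_injective
      (f := fun w : {w : Fin (n' + 1) → Fin (m + 1) // IsWalk ⊤ w} =>
        ((w.1 0, fun i : Fin n' =>
          idx (w.1 ⟨i.1, by omega⟩) (w.1 ⟨i.1 + 1, by omega⟩)
            (((SimpleGraph.top_adj _ _).mp (w.2 i.1 (by omega))).symm)) :
          Fin (m + 1) × (Fin n' → Fin m)))
    rintro ⟨w, hw⟩ ⟨v, hv⟩ heq
    simp only [Prod.mk.injEq] at heq
    have key : ∀ j, ∀ hj : j < n' + 1, w ⟨j, hj⟩ = v ⟨j, hj⟩ := by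
      intro j
      induction j with
      | zero =>
        intro hj
        have h0 : (⟨0, hj⟩ : Fin (n' + 1)) = 0 := by ext; simp
        rw [h0]; exact heq.1
      | succ j ih =>
        intro hj
        have hj' : j < n' := by omega
        have hjl : j < n' + 1 := by omega
        exact idx_eq_imp (ih hjl) (congrFun heq.2 ⟨j, hj'⟩)
    exact Subtype.ext (funext fun i => by
      have := key i.1 i.2
      simpa using this)
  · cases n' with
    | zero =>
      apply Nat.card_le_card_of_injective
        (f := fun p : Fin (m + 1) × (Fin 0 → Fin m) =>
          (⟨fun _ => p.1, fun i hi => by omega⟩ : {w : Fin 1 → Fin (m + 1) // IsWalk ⊤ w}))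
      rintro ⟨a, f⟩ ⟨b, g⟩ hpq
      have : a = b := congrFun (congrArg Subtype.val hpq) 0
      exact Prod.ext this (funext fun i => absurd i.2 (by omega))
    | succ j =>
      apply Nat.card_le_card_of_injective
        (f := fun p : Fin (m + 1) × (Fin (j + 1) → Fin m) =>
          (⟨fun i => nth p.1 (fext p.2) i.1, by
            intro i hi
            rw [SimpleGraph.top_adj]
            exact Fin.ne_succAbove _ _⟩ : {w : Fin (j + 2) → Fin (m + 1) // IsWalk ⊤ w}))
      rintro ⟨a, f⟩ ⟨b, g⟩ hpq
      have hfun : ∀ i : Fin (j + 2), nth a (fext f) i.1 = nth b (fext g) i.1 :=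
        congrFun (congrArg Subtype.val hpq)
      have key : ∀ t, t < j + 2 → nth a (fext f) t = nth b (fext g) t :=
        fun t ht => hfun ⟨t, ht⟩
      refine Prod.ext (key 0 (by omega)) (funext fun i => ?_)
      have h1 : nth a (fext f) i.1 = nth b (fext g) i.1 := key i.1 (by omega)
      have h3 : (nth a (fext f) i.1).succAbove (fext f i.1)
          = (nth b (fext g) i.1).succAbove (fext g i.1) := key (i.1 + 1) (by omega)
      rw [h1] at h3
      have h4 : fext f i.1 = fext g i.1 := Fin.succAbove_right_injective h3
      rw [fext_lt f i.2, fext_lt g i.2] at h4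
      simpa using h4

lemma not_surj_exists {α β : Type*} {f : α → β} (h : ¬ Surjective f) :
    ∃ b, ∀ a, f a ≠ b := by
  unfold Function.Surjective at h
  push_neg at h
  exact h

noncomputable def miss {n m : ℕ}
    (x : {w : Fin n → Fin (m + 1) // IsWalk ⊤ w ∧ ¬ Surjective w}) : Fin (m + 1) :=
  (not_surj_exists x.2.2).choose

lemma miss_spec {n m : ℕ}
    (x : {w : Fin n → Fin (m + 1) // IsWalk ⊤ w ∧ ¬ Surjective w}) (i : Fin n) :
    x.1 i ≠ miss x :=
  (not_surj_exists x.2.2).choose_spec i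

lemma card_nonsurj_le (m n : ℕ) :
    Nat.card {w : Fin n → Fin (m + 1) // IsWalk ⊤ w ∧ ¬ Surjective w} ≤
      (m + 1) * Nat.card {w : Fin n → Fin m // IsWalk (⊤ : SimpleGraph (Fin m)) w} := by
  have hb : Nat.card {w : Fin n → Fin (m + 1) // IsWalk ⊤ w ∧ ¬ Surjective w} ≤
      Nat.card (Fin (m + 1) × {w : Fin n → Fin m // IsWalk (⊤ : SimpleGraph (Fin m)) w}) := by
    apply Nat.card_le_card_of_injective
      (f := fun x => (miss x, ⟨fun i => idx (miss x) (x.1 i) (miss_spec x i), by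
        intro i hi
        rw [SimpleGraph.top_adj]
        intro hcontra
        apply (SimpleGraph.top_adj _ _).mp (x.2.1 i hi)
        have := congrArg (miss x).succAbove hcontra
        rwa [succAbove_idx, succAbove_idx] at this⟩))
    intro x y hxy
    simp only [Prod.mk.injEq] at hxy
    obtain ⟨hv, hw⟩ := hxy
    have hw' := congrArg Subtype.val hw
    apply Subtype.ext
    funext i
    have e : idx (miss x) (x.1 i) (miss_spec x i) = idx (miss y) (y.1 i) (miss_spec y i) :=
      congrFun hw' i
    calc x.1 i = (miss x).succAbove (idx (miss x) (x.1 i) (miss_spec x i)) := by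
            rw [succAbove_idx]
      _ = (miss x).succAbove (idx (miss y) (y.1 i) (miss_spec y i)) := by rw [e]
      _ = (miss y).succAbove (idx (miss y) (y.1 i) (miss_spec y i)) := by rw [hv]
      _ = y.1 i := succAbove_idx _ _ _
  calc Nat.card {w : Fin n → Fin (m + 1) // IsWalk ⊤ w ∧ ¬ Surjective w}
      ≤ Nat.card (Fin (m + 1) × {w : Fin n → Fin m // IsWalk (⊤ : SimpleGraph (Fin m)) w}) := hb
    _ = (m + 1) * Nat.card {w : Fin n → Fin m // IsWalk (⊤ : SimpleGraph (Fin m)) w} := by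
        rw [Nat.card_prod, Nat.card_eq_fintype_card, Fintype.card_fin]

lemma card_split {α : Type*} [Finite α] (P Q : α → Prop) :
    Nat.card {x // P x} = Nat.card {x // P x ∧ Q x} + Nat.card {x // P x ∧ ¬ Q x} := by
  classical
  rw [← Nat.card_sum]
  apply Nat.card_congr
  exact ((Equiv.sumCompl fun x : {x // P x} => Q x.1).symm.trans
    (Equiv.sumCongr (Equiv.subtypeSubtypeEquivSubtypeInter P Q)
      (Equiv.subtypeSubtypeEquivSubtypeInter P fun x => ¬ Q x)))

theorem D_lt_D_succ_of_ineq (k n : ℕ) (hk : 4 ≤ k) (hn : 1 ≤ n)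
    (h : (k - 1) * (k - 2) ^ (n - 1) <
      k * (k - 1) ^ (n - 1) - k * (k - 1) * (k - 2) ^ (n - 1)) :
    D n (k - 1) < D n k := by
  obtain ⟨m, rfl⟩ : ∃ m, k = m + 2 := ⟨k - 2, by omega⟩
  obtain ⟨n', rfl⟩ : ∃ n', n = n' + 1 := ⟨n - 1, by omega⟩
  have hke : m + 2 - 1 = m + 1 := rfl
  have hke2 : m + 2 - 2 = m := rfl
  have hne : n' + 1 - 1 = n' := rfl
  rw [hke, hke2, hne] at h
  show D (n' + 1) (m + 1) < D (n' + 1) (m + 2)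
  have hsplit : Nat.card {w : Fin (n' + 1) → Fin (m + 2) // IsWalk ⊤ w}
      = D (n' + 1) (m + 2)
        + Nat.card {w : Fin (n' + 1) → Fin (m + 2) // IsWalk ⊤ w ∧ ¬ Surjective w} :=
    card_split (IsWalk (⊤ : SimpleGraph (Fin (m + 2)))) Surjective
  have hW2 : Nat.card {w : Fin (n' + 1) → Fin (m + 2) // IsWalk ⊤ w}
      = (m + 2) * (m + 1) ^ n' := card_walks (m + 1) n'
  have hW1 : Nat.card {w : Fin (n' + 1) → Fin (m + 1) // IsWalk ⊤ w}
      = (m + 1) * m ^ n' := card_walks m n'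
  have hN : Nat.card {w : Fin (n' + 1) → Fin (m + 2) // IsWalk ⊤ w ∧ ¬ Surjective w}
      ≤ (m + 2) * Nat.card {w : Fin (n' + 1) → Fin (m + 1) // IsWalk ⊤ w} :=
    card_nonsurj_le (m + 1) (n' + 1)
  have hS1 : D (n' + 1) (m + 1) ≤
      Nat.card {w : Fin (n' + 1) → Fin (m + 1) // IsWalk ⊤ w} := by
    apply Nat.card_le_card_of_injective (f := fun x => ⟨x.1, x.2.1⟩)
    intro a b hab
    have h2 : (⟨a.1, a.2.1⟩ : {w : Fin (n' + 1) → Fin (m + 1) // IsWalk ⊤ w})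
        = ⟨b.1, b.2.1⟩ := hab
    rw [Subtype.mk.injEq] at h2
    exact Subtype.ext h2
  have h' : (m + 1) * m ^ n' < (m + 2) * (m + 1) ^ n' - (m + 2) * ((m + 1) * m ^ n') := by
    rw [← mul_assoc]; exact h
  rw [hW1] at hN hS1
  rw [hW2] at hsplit
  generalize hA : (m + 1) * m ^ n' = A at hS1 hN h'
  generalize hB : (m + 2) * (m + 1) ^ n' = B at hsplit h'
  generalize hC : (m + 2) * A = C at hN h'
  omega

end PaperStmt
end

section
/- The function f(x) = 1 + (ln(x²−1) − ln x)/(ln(x−1) − ln(x−2)) is strictly increasing on the real interval [4, ∞). -/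
namespace PaperStmt

/-- `f x = 1 + (ln(x² − 1) − ln x) / (ln(x − 1) − ln(x − 2))`. -/
noncomputable def f (x : ℝ) : ℝ :=
  1 + (Real.log (x ^ 2 - 1) - Real.log x) / (Real.log (x - 1) - Real.log (x - 2))

theorem f_strictMonoOn : StrictMonoOn f (Set.Ici (4 : ℝ)) := by
  intro x hx y hy hxy
  simp only [f]
  have hx4 : (4:ℝ) ≤ x := hx
  have hy4 : (4:ℝ) ≤ y := hy
  have hx0 : (0:ℝ) < x := by linarith
  have hy0 : (0:ℝ) < y := by linarith
  have hx2 : (0:ℝ) < x - 2 := by linarith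
  have hy2 : (0:ℝ) < y - 2 := by linarith
  have hxsq : (0:ℝ) < x ^ 2 - 1 := by nlinarith
  have hysq : (0:ℝ) < y ^ 2 - 1 := by nlinarith
  have hNx : Real.log (x ^ 2 - 1) - Real.log x = Real.log ((x ^ 2 - 1) / x) :=
    (Real.log_div hxsq.ne' hx0.ne').symm
  have hNy : Real.log (y ^ 2 - 1) - Real.log y = Real.log ((y ^ 2 - 1) / y) :=
    (Real.log_div hysq.ne' hy0.ne').symm
  have hDx : Real.log (x - 1) - Real.log (x - 2) = Real.log ((x - 1) / (x - 2)) :=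
    (Real.log_div (by linarith) hx2.ne').symm
  have hDy : Real.log (y - 1) - Real.log (y - 2) = Real.log ((y - 1) / (y - 2)) :=
    (Real.log_div (by linarith) hy2.ne').symm
  rw [hNx, hNy, hDx, hDy]
  have hNxpos : 0 < Real.log ((x ^ 2 - 1) / x) := by
    apply Real.log_pos
    rw [lt_div_iff₀ hx0]; nlinarith
  have hN : Real.log ((x ^ 2 - 1) / x) < Real.log ((y ^ 2 - 1) / y) := by
    apply Real.log_lt_log (by positivity)
    rw [div_lt_div_iff₀ hx0 hy0]
    nlinarith [mul_pos (sub_pos.mpr hxy) (show (0:ℝ) < x*y+1 by positivity)]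
  have hNypos : 0 < Real.log ((y ^ 2 - 1) / y) := hNxpos.trans hN
  have hDypos : 0 < Real.log ((y - 1) / (y - 2)) := by
    apply Real.log_pos
    rw [lt_div_iff₀ hy2]; linarith
  have hD : Real.log ((y - 1) / (y - 2)) < Real.log ((x - 1) / (x - 2)) := by
    apply Real.log_lt_log (div_pos (by linarith) hy2)
    rw [div_lt_div_iff₀ hy2 hx2]; nlinarith
  have hDxpos : 0 < Real.log ((x - 1) / (x - 2)) := hDypos.trans hD
  have key : Real.log ((x ^ 2 - 1) / x) / Real.log ((x - 1) / (x - 2)) <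
      Real.log ((y ^ 2 - 1) / y) / Real.log ((y - 1) / (y - 2)) := by
    rw [div_lt_div_iff₀ hDxpos hDypos]
    nlinarith [mul_pos (sub_pos.mpr hN) hDypos, mul_pos hNypos (sub_pos.mpr hD)]
  linarith

end PaperStmt
end

section
/- The function g(x) = x·ln x / f(x), where f(x) = 1 + (ln(x²−1) − ln x)/(ln(x−1) − ln(x−2)), is decreasing on the real interval [4, ∞) and tends to 1 as x tends to infinity. -/
/-!
Pass to the reciprocal `f x / (x ln x) = 1 / (x ln x) + q x * r x`, where
`q x = (ln (x² - 1) - ln x) / ln x` and `r x = 1 / (x (ln (x - 1) - ln (x - 2)))` both increase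
to `1` while `1 / (x ln x)` decreases to `0`; this gives the limit, and monotonicity reduces to
`q r' ≥ (ln x + 1) / (x ln x)²`. Since `q ≥ 19/20` on `[4, ∞)`, this follows from the trapezoid
bound `ln (x - 1) - ln (x - 2) ≤ (1 / (x - 1) + 1 / (x - 2)) / 2` (that is, `z ≤ sinh z`), which
makes `r'` of order `3 / (2 x²)`, larger than `(1 / ln x + 1 / ln² x) / x²` for `ln x ≥ 4/3`.
-/

namespace PaperStmt

open Real Filter Set Topology

lemma log_le_half_sub_inv {y : ℝ} (hy : 1 ≤ y) : log y ≤ (y - y⁻¹) / 2 := by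
  rw [← sinh_log (by linarith)]
  exact self_le_sinh_iff.2 (log_nonneg hy)

lemma log_sub_log_le_trapezoid {u v : ℝ} (hu : 0 < u) (huv : u ≤ v) :
    log v - log u ≤ (v - u) * (u⁻¹ + v⁻¹) / 2 := by
  have hv : 0 < v := hu.trans_le huv
  rw [← log_div hv.ne' hu.ne']
  calc log (v / u) ≤ (v / u - (v / u)⁻¹) / 2 := log_le_half_sub_inv ((one_le_div hu).2 huv)
    _ = (v - u) * (u⁻¹ + v⁻¹) / 2 := by field_simp; ring

lemma sub_div_le_log_sub_log {u v : ℝ} (hu : 0 < u) (hv : 0 < v) :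
    (v - u) / v ≤ log v - log u := by
  rw [← log_div hv.ne' hu.ne']
  calc (v - u) / v = 1 - (v / u)⁻¹ := by field_simp
    _ ≤ log (v / u) := one_sub_inv_le_log_of_pos (div_pos hv hu)

lemma log_sub_log_le_sub_div {u v : ℝ} (hu : 0 < u) (hv : 0 < v) :
    log v - log u ≤ (v - u) / u := by
  rw [← log_div hv.ne' hu.ne']
  calc log (v / u) ≤ v / u - 1 := log_le_sub_one_of_pos (div_pos hv hu)
    _ = (v - u) / u := by field_simp

lemma monotoneOn_of_forall_hasDerivAt_nonneg {g : ℝ → ℝ} {D : Set ℝ} (hD : Convex ℝ D)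
    (hg : ∀ x ∈ D, ∃ d, 0 ≤ d ∧ HasDerivAt g d x) : MonotoneOn g D := by
  choose d hd hgd using hg
  refine monotoneOn_of_deriv_nonneg hD (fun x hx => (hgd x hx).continuousAt.continuousWithinAt)
    (fun x hx => (hgd x (interior_subset hx)).differentiableAt.differentiableWithinAt)
    (fun x hx => ?_)
  rw [(hgd x (interior_subset hx)).deriv]
  exact hd x _

lemma four_thirds_le_log {x : ℝ} (hx : 4 ≤ x) : 4 / 3 ≤ log x := by
  have h4 : log 4 = 2 * log 2 := by
    rw [show (4 : ℝ) = 2 ^ 2 by norm_num, log_pow]; push_cast; ring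
  linarith [log_two_gt_d9, log_le_log (by norm_num) hx]

noncomputable def fNum (x : ℝ) : ℝ := log (x ^ 2 - 1) - log x

noncomputable def fDen (x : ℝ) : ℝ := log (x - 1) - log (x - 2)

lemma f_eq (x : ℝ) : f x = 1 + fNum x / fDen x := rfl

lemma inv_sub_one_le_fDen {x : ℝ} (hx : 2 < x) : (x - 1)⁻¹ ≤ fDen x := by
  have h := sub_div_le_log_sub_log (u := x - 2) (v := x - 1) (by linarith) (by linarith)
  rwa [show x - 1 - (x - 2) = 1 by ring, one_div] at h

lemma fDen_pos {x : ℝ} (hx : 2 < x) : 0 < fDen x :=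
  (inv_pos.2 (by linarith)).trans_le (inv_sub_one_le_fDen hx)

lemma fDen_le_inv_sub_two {x : ℝ} (hx : 2 < x) : fDen x ≤ (x - 2)⁻¹ := by
  have h := log_sub_log_le_sub_div (u := x - 2) (v := x - 1) (by linarith) (by linarith)
  rwa [show x - 1 - (x - 2) = 1 by ring, one_div] at h

lemma fDen_le_trapezoid {x : ℝ} (hx : 2 < x) :
    fDen x ≤ (2 * x - 3) / (2 * ((x - 1) * (x - 2))) := by
  have h1 : x - 1 ≠ 0 := by linarith
  have h2 : x - 2 ≠ 0 := by linarith
  calc fDen x ≤ (x - 1 - (x - 2)) * ((x - 2)⁻¹ + (x - 1)⁻¹) / 2 :=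
        log_sub_log_le_trapezoid (by linarith) (by linarith)
    _ = (2 * x - 3) / (2 * ((x - 1) * (x - 2))) := by field_simp; ring

lemma inv_mul_fDen_bounds {x : ℝ} (hx : 2 < x) :
    1 - 2 * x⁻¹ ≤ (x * fDen x)⁻¹ ∧ (x * fDen x)⁻¹ ≤ 1 - x⁻¹ := by
  have hx0 : 0 < x := by linarith
  constructor
  · calc 1 - 2 * x⁻¹ = (x * (x - 2)⁻¹)⁻¹ := by field_simp
      _ ≤ (x * fDen x)⁻¹ := inv_anti₀ (mul_pos hx0 (fDen_pos hx)) (by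
          gcongr; exact fDen_le_inv_sub_two hx)
  · calc (x * fDen x)⁻¹ ≤ (x * (x - 1)⁻¹)⁻¹ :=
          inv_anti₀ (mul_pos hx0 (inv_pos.2 (by linarith))) (by
            gcongr; exact inv_sub_one_le_fDen hx)
      _ = 1 - x⁻¹ := by field_simp

lemma fNum_le_log {x : ℝ} (hx : 1 < x) : fNum x ≤ log x := by
  have h := log_le_log (by nlinarith) (show x ^ 2 - 1 ≤ x ^ 2 by linarith)
  rw [log_pow] at h
  unfold fNum
  push_cast at h
  linarith

lemma log_sub_le_fNum {x : ℝ} (hx : 4 ≤ x) : log x - 1 / 15 ≤ fNum x := by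
  have hx2 : 15 ≤ x ^ 2 - 1 := by nlinarith
  have h := log_sub_log_le_sub_div (u := x ^ 2 - 1) (v := x ^ 2) (by linarith) (by positivity)
  rw [log_pow, show x ^ 2 - (x ^ 2 - 1) = 1 by ring] at h
  have h' : 1 / (x ^ 2 - 1) ≤ 1 / 15 := one_div_le_one_div_of_le (by norm_num) hx2
  unfold fNum
  push_cast at h
  linarith

lemma fNum_div_log_bounds {x : ℝ} (hx : 4 ≤ x) :
    1 - 15⁻¹ * (log x)⁻¹ ≤ fNum x / log x ∧ fNum x / log x ≤ 1 := by
  have hL : 0 < log x := by linarith [four_thirds_le_log hx]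
  constructor
  · calc 1 - 15⁻¹ * (log x)⁻¹ = (log x - 1 / 15) / log x := by field_simp
      _ ≤ fNum x / log x := by gcongr; exact log_sub_le_fNum hx
  · exact (div_le_one hL).2 (fNum_le_log (by linarith))

lemma f_pos {x : ℝ} (hx : 4 ≤ x) : 0 < f x := by
  have hNum : 0 < fNum x := by linarith [log_sub_le_fNum hx, four_thirds_le_log hx]
  rw [f_eq]
  linarith [div_pos hNum (fDen_pos (by linarith : (2 : ℝ) < x))]

lemma hasDerivAt_inv_mul_log {x : ℝ} (hx : 0 < x) (hL : log x ≠ 0) :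
    HasDerivAt (fun y => (y * log y)⁻¹) (-(log x + 1) / (x * log x) ^ 2) x := by
  refine (((hasDerivAt_id' x).mul (hasDerivAt_log hx.ne')).inv
    (mul_ne_zero hx.ne' hL)).congr_deriv ?_
  simp only [Pi.mul_apply]
  field_simp

lemma hasDerivAt_fNum {x : ℝ} (hx : 1 < x) :
    HasDerivAt fNum ((x ^ 2 + 1) / (x * (x ^ 2 - 1))) x := by
  have hx0 : 0 < x := by linarith
  have hx2 : x ^ 2 - 1 ≠ 0 := by nlinarith
  refine ((((hasDerivAt_pow 2 x).sub_const 1).log hx2).sub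
    (hasDerivAt_log hx0.ne')).congr_deriv ?_
  field_simp
  ring

lemma hasDerivAt_fNum_div_log {x : ℝ} (hx : 1 < x) :
    HasDerivAt (fun y => fNum y / log y)
      (((x ^ 2 + 1) / (x ^ 2 - 1) * log x - fNum x) / (x * log x ^ 2)) x := by
  have hx2 : x ^ 2 - 1 ≠ 0 := by nlinarith
  refine ((hasDerivAt_fNum hx).div (hasDerivAt_log (by linarith))
    (log_pos hx).ne').congr_deriv ?_
  field_simp

lemma hasDerivAt_fDen {x : ℝ} (hx : 2 < x) :
    HasDerivAt fDen (-((x - 1) * (x - 2))⁻¹) x := by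
  have h1 : x - 1 ≠ 0 := by linarith
  have h2 : x - 2 ≠ 0 := by linarith
  refine ((((hasDerivAt_id' x).sub_const 1).log h1).sub
    (((hasDerivAt_id' x).sub_const 2).log h2)).congr_deriv ?_
  field_simp
  ring

lemma hasDerivAt_inv_mul_fDen {x : ℝ} (hx : 2 < x) :
    HasDerivAt (fun y => (y * fDen y)⁻¹)
      ((x / ((x - 1) * (x - 2)) - fDen x) / (x * fDen x) ^ 2) x := by
  have h1 : x - 1 ≠ 0 := by linarith
  have h2 : x - 2 ≠ 0 := by linarith
  have hD := (fDen_pos hx).ne'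
  refine (((hasDerivAt_id' x).mul (hasDerivAt_fDen hx)).inv
    (mul_ne_zero (by linarith) hD)).congr_deriv ?_
  simp only [Pi.mul_apply]
  field_simp
  ring

lemma add_one_mul_sq_le_of_le_trapezoid {x L a : ℝ} (hx : 4 ≤ x) (hL : 4 / 3 ≤ L)
    (ha : a ≤ (2 * x - 3) / (2 * ((x - 1) * (x - 2)))) (ha0 : 0 < a) :
    (L + 1) * a ^ 2 ≤ 19 / 20 * (x / ((x - 1) * (x - 2)) - a) * L ^ 2 := by
  set D := (x - 1) * (x - 2) with hD_def
  have hD : 6 ≤ D := by nlinarith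
  have hgap : 3 / (2 * D) ≤ x / D - a := by
    have : x / D - (2 * x - 3) / (2 * D) = 3 / (2 * D) := by field_simp; ring
    linarith
  have hsq : a ^ 2 ≤ (4 * D + 1) / (4 * D ^ 2) := by
    calc a ^ 2 ≤ ((2 * x - 3) / (2 * D)) ^ 2 := by gcongr
      _ = (4 * D + 1) / (4 * D ^ 2) := by rw [hD_def]; field_simp; ring
  have hpoly : (L + 1) * (4 * D + 1) ≤ 57 / 10 * L ^ 2 * D := by
    have hL' : 0 ≤ 57 / 10 * L ^ 2 - 4 * L - 4 := by nlinarith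
    nlinarith [mul_le_mul_of_nonneg_right hD hL']
  calc (L + 1) * a ^ 2 ≤ (L + 1) * ((4 * D + 1) / (4 * D ^ 2)) := by gcongr
    _ ≤ 19 / 20 * (3 / (2 * D)) * L ^ 2 := by
        rw [mul_div_assoc', div_le_iff₀ (by positivity)]
        calc (L + 1) * (4 * D + 1) ≤ 57 / 10 * L ^ 2 * D := hpoly
          _ = 19 / 20 * (3 / (2 * D)) * L ^ 2 * (4 * D ^ 2) := by field_simp; ring
    _ ≤ 19 / 20 * (x / D - a) * L ^ 2 := by gcongr

lemma f_div_mul_log_eq (x : ℝ) :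
    f x / (x * log x) = (x * log x)⁻¹ + fNum x / log x * (x * fDen x)⁻¹ := by
  simp only [f_eq, div_eq_mul_inv, mul_inv]
  ring

lemma exists_hasDerivAt_f_div_mul_log_nonneg {x : ℝ} (hx : 4 ≤ x) :
    ∃ d, 0 ≤ d ∧ HasDerivAt (fun y => f y / (y * log y)) d x := by
  have hx0 : 0 < x := by linarith
  have hL := four_thirds_le_log hx
  have ha := fDen_pos (by linarith : (2 : ℝ) < x)
  have hp := hasDerivAt_inv_mul_log hx0 (by linarith : (0 : ℝ) < log x).ne'
  have hq := hasDerivAt_fNum_div_log (by linarith : (1 : ℝ) < x)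
  have hr := hasDerivAt_inv_mul_fDen (by linarith : (2 : ℝ) < x)
  rw [show (fun y => f y / (y * log y)) = _ from funext f_div_mul_log_eq]
  refine ⟨_, ?_, hp.add (hq.mul hr)⟩
  have hq' : 0 ≤ ((x ^ 2 + 1) / (x ^ 2 - 1) * log x - fNum x) / (x * log x ^ 2) := by
    have : 1 ≤ (x ^ 2 + 1) / (x ^ 2 - 1) := by rw [le_div_iff₀ (by nlinarith)]; linarith
    have := fNum_le_log (by linarith : (1 : ℝ) < x)
    exact div_nonneg (by nlinarith) (by positivity)
  have hq19 : 19 / 20 ≤ fNum x / log x := by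
    have : 15⁻¹ * (log x)⁻¹ ≤ 15⁻¹ * (4 / 3)⁻¹ := by gcongr
    linarith [(fNum_div_log_bounds hx).1]
  have hkey := add_one_mul_sq_le_of_le_trapezoid hx hL (fDen_le_trapezoid (by linarith)) ha
  have hr' : 0 ≤ (x / ((x - 1) * (x - 2)) - fDen x) / (x * fDen x) ^ 2 := by
    apply div_nonneg _ (sq_nonneg _)
    nlinarith
  have hmain : (log x + 1) / (x * log x) ^ 2 ≤
      19 / 20 * ((x / ((x - 1) * (x - 2)) - fDen x) / (x * fDen x) ^ 2) := by
    rw [mul_div_assoc', div_le_div_iff₀ (by positivity) (by positivity)]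
    calc (log x + 1) * (x * fDen x) ^ 2 = x ^ 2 * ((log x + 1) * fDen x ^ 2) := by ring
      _ ≤ x ^ 2 * (19 / 20 * (x / ((x - 1) * (x - 2)) - fDen x) * log x ^ 2) := by gcongr
      _ = _ := by ring
  rw [neg_div]
  nlinarith [mul_nonneg hq' (inv_pos.2 (mul_pos hx0 ha)).le, mul_le_mul_of_nonneg_right hq19 hr']

lemma monotoneOn_f_div_mul_log : MonotoneOn (fun x => f x / (x * log x)) (Ici 4) :=
  monotoneOn_of_forall_hasDerivAt_nonneg (convex_Ici 4)
    fun _ hx => exists_hasDerivAt_f_div_mul_log_nonneg hx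

lemma tendsto_f_div_mul_log : Tendsto (fun x => f x / (x * log x)) atTop (𝓝 1) := by
  have hp : Tendsto (fun x => (x * log x)⁻¹) atTop (𝓝 0) :=
    (tendsto_id.atTop_mul_atTop₀ tendsto_log_atTop).inv_tendsto_atTop
  have hq : Tendsto (fun x => fNum x / log x) atTop (𝓝 1) := by
    have h := (tendsto_log_atTop.inv_tendsto_atTop.const_mul 15⁻¹).const_sub 1
    rw [mul_zero, sub_zero] at h
    refine tendsto_of_tendsto_of_tendsto_of_le_of_le' h tendsto_const_nhds ?_ ?_ <;>
      filter_upwards [eventually_ge_atTop 4] with x hx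
    exacts [(fNum_div_log_bounds hx).1, (fNum_div_log_bounds hx).2]
  have hr : Tendsto (fun x => (x * fDen x)⁻¹) atTop (𝓝 1) := by
    have h : ∀ c : ℝ, Tendsto (fun x : ℝ => 1 - c * x⁻¹) atTop (𝓝 1) := fun c => by
      simpa using (tendsto_inv_atTop_zero.const_mul c).const_sub 1
    refine tendsto_of_tendsto_of_tendsto_of_le_of_le' (h 2) (h 1) ?_ ?_ <;>
      filter_upwards [eventually_gt_atTop 2] with x hx
    exacts [(inv_mul_fDen_bounds hx).1, by simpa using (inv_mul_fDen_bounds hx).2]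
  simpa only [f_div_mul_log_eq, zero_add, one_mul] using hp.add (hq.mul hr)

theorem xlogx_div_f_antitone_tendsto :
    AntitoneOn (fun x => x * Real.log x / f x) (Set.Ici (4 : ℝ)) ∧
      Filter.Tendsto (fun x => x * Real.log x / f x) Filter.atTop (nhds 1) := by
  refine ⟨fun x hx y hy hxy => ?_, ?_⟩
  · have hpos : 0 < f x / (x * log x) :=
      div_pos (f_pos hx) (mul_pos (by linarith [hx.out]) (by linarith [four_thirds_le_log hx]))
    simp only [← inv_div (f _)]
    exact inv_anti₀ hpos (monotoneOn_f_div_mul_log hx hy hxy)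
  · simpa only [inv_div, inv_one] using tendsto_f_div_mul_log.inv₀ one_ne_zero

end PaperStmt
end

section
/- For every integer k ≥ 4, f(k) ≤ k·ln k, where f(k) = 1 + (ln(k²−1) − ln k)/(ln(k−1) − ln(k−2)); consequently ⌈f(k)⌉ ≤ ⌈k·ln k⌉. -/
namespace PaperStmt

theorem f_le_mul_log (k : ℕ) (hk : 4 ≤ k) :
    f k ≤ (k : ℝ) * Real.log k ∧ ⌈f k⌉ ≤ ⌈(k : ℝ) * Real.log k⌉ := by
  have hx : (4:ℝ) ≤ (k:ℝ) := by exact_mod_cast hk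
  set x : ℝ := (k:ℝ) with hxdef
  have h2 : (0:ℝ) < x - 2 := by linarith
  have h1 : (0:ℝ) < x - 1 := by linarith
  have hx0 : (0:ℝ) < x := by linarith
  set D : ℝ := Real.log (x-1) - Real.log (x-2) with hDdef
  set N : ℝ := Real.log (x ^ 2 - 1) - Real.log x with hNdef
  set lg : ℝ := Real.log x with hlgdef
  have hD : 0 < D := by
    have := Real.log_lt_log h2 (by linarith : x - 2 < x - 1)
    simp only [hDdef]; linarith
  -- D ≥ 1/(x-1)
  have hsub : Real.log (x-2) - Real.log (x-1) ≤ (x-2)/(x-1) - 1 := by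
    have h := Real.log_le_sub_one_of_pos (show 0 < (x-2)/(x-1) from div_pos h2 h1)
    rwa [Real.log_div (ne_of_gt h2) (ne_of_gt h1)] at h
  have hDlb : 1/(x-1) ≤ D := by
    have heq : (x-2)/(x-1) - 1 = -(1/(x-1)) := by field_simp; norm_num
    rw [heq] at hsub
    simp only [hDdef]; linarith
  have hDx : 1 ≤ D * (x-1) := by
    have := (div_le_iff₀ h1).mp hDlb
    linarith [this]
  -- N ≤ lg
  have hsq : (0:ℝ) < x^2 - 1 := by nlinarith
  have hN : N ≤ lg := by
    have h := Real.log_le_log hsq (show x^2 - 1 ≤ x^2 by linarith)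
    have h2' : Real.log (x^2) = 2 * Real.log x := by
      rw [sq, Real.log_mul (ne_of_gt hx0) (ne_of_gt hx0)]; ring
    simp only [hNdef, hlgdef]; rw [h2'] at h; linarith
  -- lg ≥ 1
  have hlg1 : 1 ≤ lg := by
    rw [hlgdef, Real.le_log_iff_exp_le hx0]
    have := Real.exp_one_lt_d9
    linarith
  have hmain : f x ≤ x * lg := by
    have hgoal : N / D ≤ x * lg - 1 := by
      rw [div_le_iff₀ hD]
      nlinarith [mul_le_mul_of_nonneg_left hDx (by linarith : (0:ℝ) ≤ lg),
        mul_nonneg (by linarith : (0:ℝ) ≤ lg - 1) hD.le]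
    simp only [f, ← hDdef, ← hNdef]
    linarith
  exact ⟨hmain, Int.ceil_le_ceil hmain⟩

end PaperStmt
end
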